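/- arXiv:2001.07850 — 3 statements merged into one kernel-verified Lean document; each statement's English description precedes it below -/
import Mathlib

section
/- For all integers 2 ≤ n ≤ m, γ_{2t}(K_n □ K_m) ≤ γ_{2t}(K_{n+1} □ K_m) ≤ γ_{2t}(K_n □ K_m) + 2. -/
open SimpleGraph

/-- `S` is a total 2-dominating set of `G`: every vertex has at least 2 neighbors in `S`. -/
def TotalTwoDom {V : Type*} (G : SimpleGraph V) (S : Set V) : Prop :=
  ∀ v : V, 2 ≤ (S ∩ {u | G.Adj v u}).ncard

/-- The total 2-domination number of `G`. -/
noncomputable def gamma2t {V : Type*} [Fintype V] (G : SimpleGraph V) : ℕ :=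
  sInf {k | ∃ S : Set V, TotalTwoDom G S ∧ S.ncard = k}

/-- The complete graph on `n` vertices. -/
def K (n : ℕ) : SimpleGraph (Fin n) := ⊤

/-!
Think of `K n □ K m` as the `n × m` rook's graph: two cells are adjacent when they share a row or
a column.

Upper bound: embed an optimal set of `K n □ K m` into the first `n` rows of `K (n + 1) □ K m` and
add the two cells of the new row lying in two columns that already meet the set.

Lower bound: the two full columns of `K n □ K m` form a total 2-dominating set of size `2n`. If the
optimum `S` for `K (n + 1) □ K m` is smaller than that, some row `ρ` meets `S` in at most one cell
`(ρ, c₀)`. Deleting row `ρ` harms only column `c₀`, which still contains two cells of `S` since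
`(ρ, c₀)` is dominated; one further cell (a third one in column `c₀`, or when `n = 2` a cell
completing a row) repairs the set, and it replaces the deleted `(ρ, c₀)`.
-/

section TwoDomination

variable {V W : Type*} {G : SimpleGraph V} {H : SimpleGraph W}

def TwoDominated (G : SimpleGraph V) (S : Set V) (v : V) : Prop :=
  ∃ x ∈ S, ∃ y ∈ S, x ≠ y ∧ G.Adj v x ∧ G.Adj v y

theorem totalTwoDom_iff [Finite V] {S : Set V} :
    TotalTwoDom G S ↔ ∀ v, TwoDominated G S v := by
  refine forall_congr' fun v => ?_
  change 1 < _ ↔ _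
  rw [Set.one_lt_ncard_iff (Set.toFinite _)]
  exact ⟨fun ⟨x, y, ⟨hx, hvx⟩, ⟨hy, hvy⟩, hxy⟩ => ⟨x, hx, y, hy, hxy, hvx, hvy⟩,
    fun ⟨x, hx, y, hy, hxy, hvx, hvy⟩ => ⟨x, y, ⟨hx, hvx⟩, ⟨hy, hvy⟩, hxy⟩⟩

namespace TwoDominated

variable {S T : Set V} {v : V}

theorem mono (h : TwoDominated G S v) (hST : S ⊆ T) : TwoDominated G T v :=
  let ⟨x, hx, y, hy, hxy, hvx, hvy⟩ := h
  ⟨x, hST hx, y, hST hy, hxy, hvx, hvy⟩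

theorem map (f : G ↪g H) (h : TwoDominated G S v) : TwoDominated H (f '' S) (f v) :=
  let ⟨x, hx, y, hy, hxy, hvx, hvy⟩ := h
  ⟨f x, Set.mem_image_of_mem f hx, f y, Set.mem_image_of_mem f hy, f.injective.ne hxy,
    f.map_adj_iff.2 hvx, f.map_adj_iff.2 hvy⟩

theorem comap (f : G ↪g H) {S : Set W} (h : TwoDominated H S (f v))
    (hS : ∀ w ∈ S, H.Adj (f v) w → w ∈ Set.range f) : TwoDominated G (f ⁻¹' S) v := by
  obtain ⟨_, hx, _, hy, hxy, hvx, hvy⟩ := h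
  obtain ⟨x, rfl⟩ := hS _ hx hvx
  obtain ⟨y, rfl⟩ := hS _ hy hvy
  exact ⟨x, hx, y, hy, fun h => hxy (congrArg f h), f.map_adj_iff.1 hvx, f.map_adj_iff.1 hvy⟩

end TwoDominated

theorem gamma2t_le [Fintype V] {S : Set V} (hS : TotalTwoDom G S) : gamma2t G ≤ S.ncard :=
  Nat.sInf_le ⟨S, hS, rfl⟩

theorem exists_totalTwoDom_ncard_eq_gamma2t [Fintype V] {S : Set V} (hS : TotalTwoDom G S) :
    ∃ T, TotalTwoDom G T ∧ T.ncard = gamma2t G :=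
  Nat.sInf_mem (s := {k | ∃ S : Set V, TotalTwoDom G S ∧ S.ncard = k}) ⟨_, S, hS, rfl⟩

end TwoDomination

abbrev rookGraph (α β : Type*) : SimpleGraph (α × β) := (⊤ : SimpleGraph α) □ (⊤ : SimpleGraph β)

section Rook

variable {α β : Type*}

@[simp]
theorem rookGraph_adj {x y : α × β} :
    (rookGraph α β).Adj x y ↔ x.1 ≠ y.1 ∧ x.2 = y.2 ∨ x.2 ≠ y.2 ∧ x.1 = y.1 := by
  simp [boxProd_adj]

variable {S : Set (α × β)}

theorem TwoDominated.exists_snd_ne {v : α × β} (h : TwoDominated (rookGraph α β) S v) {c : β}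
    (hc : v.2 ≠ c) : ∃ p ∈ S, p.2 ≠ c := by
  by_contra! hS
  obtain ⟨x, hx, y, hy, hxy, hvx, hvy⟩ := h
  have hx2 := hS x hx
  have hy2 := hS y hy
  simp only [rookGraph_adj] at hvx hvy
  exact hxy (Prod.ext (by grind) (by grind))

theorem TotalTwoDom.exists_snd_ne [Finite α] [Finite β] [Nonempty α] [Nontrivial β]
    (hS : TotalTwoDom (rookGraph α β) S) : ∃ p ∈ S, ∃ q ∈ S, p.2 ≠ q.2 := by
  rw [totalTwoDom_iff] at hS
  obtain ⟨p, hp, -⟩ := hS (Classical.arbitrary _)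
  obtain ⟨j, hj⟩ := exists_ne p.2
  obtain ⟨q, hq, hqp⟩ := (hS (p.1, j)).exists_snd_ne hj
  exact ⟨p, hp, q, hq, hqp.symm⟩

theorem twoDominated_of_mem_row {i : α} {c c' : β} (hc : c ≠ c') {a a' : α} (ha : a ≠ i)
    (ha' : a' ≠ i) (hic : (i, c) ∈ S) (hic' : (i, c') ∈ S) (hac : (a, c) ∈ S)
    (hac' : (a', c') ∈ S) (j : β) : TwoDominated (rookGraph α β) S (i, j) := by
  by_cases hj : j = c
  · exact ⟨_, hic', _, hac, by grind, by grind [rookGraph_adj], by grind [rookGraph_adj]⟩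
  by_cases hj' : j = c'
  · exact ⟨_, hic, _, hac', by grind, by grind [rookGraph_adj], by grind [rookGraph_adj]⟩
  exact ⟨_, hic, _, hic', by grind, by grind [rookGraph_adj], by grind [rookGraph_adj]⟩

theorem twoDominated_of_mem_column {c : β} {a₁ a₂ a₃ : α} (h₁₂ : a₁ ≠ a₂) (h₁₃ : a₁ ≠ a₃)
    (h₂₃ : a₂ ≠ a₃) (h₁ : (a₁, c) ∈ S) (h₂ : (a₂, c) ∈ S) (h₃ : (a₃, c) ∈ S) (i : α) :
    TwoDominated (rookGraph α β) S (i, c) := by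
  by_cases hi₁ : i = a₁
  · exact ⟨_, h₂, _, h₃, by grind, by grind [rookGraph_adj], by grind [rookGraph_adj]⟩
  by_cases hi₂ : i = a₂
  · exact ⟨_, h₁, _, h₃, by grind, by grind [rookGraph_adj], by grind [rookGraph_adj]⟩
  exact ⟨_, h₁, _, h₂, by grind, by grind [rookGraph_adj], by grind [rookGraph_adj]⟩

theorem totalTwoDom_univ_prod_pair [Finite α] [Finite β] [Nontrivial α] {c₀ c₁ : β}
    (hc : c₀ ≠ c₁) : TotalTwoDom (rookGraph α β) (Set.univ ×ˢ {c₀, c₁}) := by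
  rw [totalTwoDom_iff]
  rintro ⟨i, j⟩
  obtain ⟨i', hi'⟩ := exists_ne i
  exact twoDominated_of_mem_row hc hi' hi' (by simp) (by simp) (by simp) (by simp) j

theorem ncard_univ_prod_pair [Fintype α] {c₀ c₁ : β} (hc : c₀ ≠ c₁) :
    (Set.univ ×ˢ {c₀, c₁} : Set (α × β)).ncard = 2 * Fintype.card α := by
  rw [Set.ncard_prod, Set.ncard_pair hc, Set.ncard_univ, Nat.card_eq_fintype_card, mul_comm]

theorem exists_row_subsingleton [Fintype α] [Finite β]
    (hS : S.ncard < 2 * Fintype.card α) : ∃ ρ, {j | (ρ, j) ∈ S}.Subsingleton := by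
  have := Fintype.ofFinite β
  classical
  obtain ⟨ρ, -, hρ⟩ := Finset.exists_card_fiber_lt_of_card_lt_mul (s := S.toFinset)
    (t := Finset.univ) (f := Prod.fst) (n := 2)
    (by rwa [← Set.ncard_eq_toFinset_card', Finset.card_univ, mul_comm])
  refine ⟨ρ, fun j hj j' hj' => ?_⟩
  have := Finset.card_le_one.1 (Nat.le_of_lt_succ hρ) (ρ, j) (by simpa using hj) (ρ, j')
    (by simpa using hj')
  exact congrArg Prod.snd this

end Rook

section RowInsertion

variable {α α' β : Type*} (f : α ↪ α') {ρ : α'}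

def rookRowEmbedding (β : Type*) : rookGraph α β ↪g rookGraph α' β where
  toEmbedding := f.prodMap (Function.Embedding.refl β)
  map_rel_iff' := by simp [f.injective.ne_iff]

@[simp]
theorem rookRowEmbedding_apply (x : α × β) : rookRowEmbedding f β x = (f x.1, x.2) := rfl

theorem mem_range_rookRowEmbedding_iff (hf : Set.range f = {ρ}ᶜ) {x : α' × β} :
    x ∈ Set.range (rookRowEmbedding f β) ↔ x.1 ≠ ρ := by
  rw [← Set.mem_compl_singleton_iff, ← hf]
  exact ⟨fun ⟨y, hy⟩ => ⟨y.1, congrArg Prod.fst hy⟩,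
    fun ⟨a, ha⟩ => ⟨(a, x.2), Prod.ext ha rfl⟩⟩

theorem TotalTwoDom.exists_addRow [Finite α] [Finite α'] [Finite β] [Nonempty α] [Nontrivial β]
    (hf : Set.range f = {ρ}ᶜ) {S : Set (α × β)} (hS : TotalTwoDom (rookGraph α β) S) :
    ∃ T, TotalTwoDom (rookGraph α' β) T ∧ T.ncard ≤ S.ncard + 2 := by
  obtain ⟨p, hp, q, hq, hpq⟩ := hS.exists_snd_ne
  set e := rookRowEmbedding f β
  have hfρ : ∀ a, f a ≠ ρ := fun a => Set.mem_compl_singleton_iff.1 (hf ▸ Set.mem_range_self a)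
  refine ⟨insert (ρ, p.2) (insert (ρ, q.2) (e '' S)), totalTwoDom_iff.2 ?_, ?_⟩
  · rintro ⟨i, j⟩
    by_cases hi : i = ρ
    · subst hi
      have hep : (f p.1, p.2) ∈ insert (i, p.2) (insert (i, q.2) (e '' S)) :=
        Set.mem_insert_of_mem _ (Set.mem_insert_of_mem _ ⟨p, hp, rfl⟩)
      have heq : (f q.1, q.2) ∈ insert (i, p.2) (insert (i, q.2) (e '' S)) :=
        Set.mem_insert_of_mem _ (Set.mem_insert_of_mem _ ⟨q, hq, rfl⟩)
      exact twoDominated_of_mem_row hpq (hfρ p.1) (hfρ q.1) (by simp) (by simp) hep heq j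
    · obtain ⟨a, rfl⟩ : i ∈ Set.range f := by rw [hf]; exact hi
      exact (((totalTwoDom_iff.1 hS) (a, j)).map e).mono
        ((Set.subset_insert _ _).trans (Set.subset_insert _ _))
  · calc _ ≤ (insert (ρ, q.2) (e '' S)).ncard + 1 := Set.ncard_insert_le _ _
      _ ≤ (e '' S).ncard + 1 + 1 := by gcongr; exact Set.ncard_insert_le _ _
      _ = S.ncard + 2 := by rw [Set.ncard_image_of_injective _ e.injective]

end RowInsertion

section RowDeletion

variable {α α' β : Type*}

theorem exists_totalTwoDom_of_twoDominated_off_column [Finite α] [Finite β] [Nontrivial β]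
    {S : Set (α × β)} {c₀ : β} (hS : ∀ v : α × β, v.2 ≠ c₀ → TwoDominated (rookGraph α β) S v)
    {a₁ a₂ : α} (ha : a₁ ≠ a₂) (h₁ : (a₁, c₀) ∈ S) (h₂ : (a₂, c₀) ∈ S) :
    ∃ T, TotalTwoDom (rookGraph α β) T ∧ T.ncard ≤ S.ncard + 1 := by
  by_cases h₃ : ∃ a₃, a₃ ≠ a₁ ∧ a₃ ≠ a₂
  · obtain ⟨a₃, h₃₁, h₃₂⟩ := h₃
    refine ⟨insert (a₃, c₀) S, totalTwoDom_iff.2 fun ⟨i, j⟩ => ?_, Set.ncard_insert_le _ _⟩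
    by_cases hj : j = c₀
    · subst hj
      exact twoDominated_of_mem_column ha h₃₁.symm h₃₂.symm (Set.mem_insert_of_mem _ h₁)
        (Set.mem_insert_of_mem _ h₂) (Set.mem_insert _ _) i
    · exact (hS _ hj).mono (Set.subset_insert _ _)
  -- Only two rows: the column `c₀` lies in `S`, and each row still needs a vertex outside it.
  have hrows : ∀ x, x = a₁ ∨ x = a₂ := fun x => by
    by_contra! h
    exact h₃ ⟨x, h.1, h.2⟩
  have : Nontrivial α := ⟨⟨a₁, a₂, ha⟩⟩
  obtain ⟨j, hj⟩ := exists_ne c₀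
  obtain ⟨⟨r, k⟩, hrk, hk⟩ := (hS (a₁, j) hj).exists_snd_ne hj
  obtain ⟨r', hr'⟩ := exists_ne r
  refine ⟨insert (r', k) S, totalTwoDom_iff.2 fun ⟨i, j'⟩ => ?_, Set.ncard_insert_le _ _⟩
  by_cases hj' : j' = c₀
  · subst hj'
    obtain ⟨b, hb⟩ := exists_ne i
    have hbS : (b, j') ∈ insert (r', k) S :=
      Set.mem_insert_of_mem _ ((hrows b).elim (· ▸ h₁) (· ▸ h₂))
    have hik : (i, k) ∈ insert (r', k) S := by
      have : i = r' ∨ i = r := by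
        rcases hrows i with rfl | rfl <;> rcases hrows r with rfl | rfl <;>
          rcases hrows r' with rfl | rfl <;> simp_all
      rcases this with rfl | rfl
      exacts [Set.mem_insert _ _, Set.mem_insert_of_mem _ hrk]
    exact ⟨_, hbS, _, hik, by grind, by grind [rookGraph_adj], by grind [rookGraph_adj]⟩
  · exact (hS _ hj').mono (Set.subset_insert _ _)

theorem TotalTwoDom.exists_deleteRow [Finite α] [Finite α'] [Finite β] [Nontrivial β]
    (f : α ↪ α') {ρ : α'} (hf : Set.range f = {ρ}ᶜ) {S : Set (α' × β)}
    (hS : TotalTwoDom (rookGraph α' β) S) (hρ : {j | (ρ, j) ∈ S}.Subsingleton) :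
    ∃ T, TotalTwoDom (rookGraph α β) T ∧ T.ncard ≤ S.ncard := by
  set e := rookRowEmbedding f β
  rw [totalTwoDom_iff] at hS
  have hcard : (e ⁻¹' S).ncard = (S ∩ Set.range e).ncard := by
    rw [← Set.ncard_image_of_injective _ e.injective, Set.image_preimage_eq_inter_range]
  -- The only vertex of row `ρ` adjacent to `e v` is `(ρ, v.2)`.
  have hdel : ∀ v, (ρ, v.2) ∉ S → TwoDominated (rookGraph α β) (e ⁻¹' S) v := by
    refine fun v hv => (hS (e v)).comap e fun w hw hvw => ?_
    rw [mem_range_rookRowEmbedding_iff f hf]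
    intro hwρ
    have hev : (e v).1 ≠ ρ := (mem_range_rookRowEmbedding_iff f hf).1 ⟨v, rfl⟩
    have hvw₂ : v.2 = w.2 := by
      rcases rookGraph_adj.1 hvw with h | h
      exacts [h.2, absurd (h.2.trans hwρ) hev]
    have : w = (ρ, v.2) := Prod.ext hwρ hvw₂.symm
    exact hv (this ▸ hw)
  by_cases hrow : ∃ c₀, (ρ, c₀) ∈ S
  · obtain ⟨c₀, hc₀⟩ := hrow
    have hcol : ∀ w ∈ S, (rookGraph α' β).Adj (ρ, c₀) w →
        ∃ a, (a, c₀) ∈ e ⁻¹' S ∧ e (a, c₀) = w := by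
      rintro ⟨i, j⟩ hw hadj
      have hi : i ≠ ρ := by
        rintro rfl
        have : j = c₀ := hρ hw hc₀
        grind [rookGraph_adj]
      obtain ⟨a, rfl⟩ : i ∈ Set.range f := by rw [hf]; exact hi
      have : j = c₀ := by grind [rookGraph_adj]
      exact ⟨a, this ▸ hw, by rw [this]; rfl⟩
    obtain ⟨x, hx, y, hy, hxy, hx', hy'⟩ := hS (ρ, c₀)
    obtain ⟨a₁, ha₁, rfl⟩ := hcol x hx hx'
    obtain ⟨a₂, ha₂, rfl⟩ := hcol y hy hy'
    obtain ⟨T, hT, hTcard⟩ := exists_totalTwoDom_of_twoDominated_off_column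
      (fun v hv => hdel v fun h => hv (hρ h hc₀)) (fun h => hxy (by rw [h])) ha₁ ha₂
    refine ⟨T, hT, hTcard.trans ?_⟩
    rw [hcard, Nat.add_one_le_iff]
    exact Set.ncard_lt_ncard ⟨Set.inter_subset_left,
      fun h => (mem_range_rookRowEmbedding_iff f hf).1 (h hc₀).2 rfl⟩
  · push Not at hrow
    exact ⟨e ⁻¹' S, totalTwoDom_iff.2 fun v => hdel v (hrow v.2),
      hcard ▸ Set.ncard_le_ncard Set.inter_subset_left⟩

end RowDeletion

theorem gamma2t_rookGraph_le_add_two {α α' β : Type*} [Fintype α] [Fintype α'] [Fintype β]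
    [Nontrivial α] [Nontrivial β] (f : α ↪ α') {ρ : α'} (hf : Set.range f = {ρ}ᶜ) :
    gamma2t (rookGraph α' β) ≤ gamma2t (rookGraph α β) + 2 := by
  obtain ⟨c₀, c₁, hc⟩ := exists_pair_ne β
  obtain ⟨S, hS, hScard⟩ :=
    exists_totalTwoDom_ncard_eq_gamma2t (totalTwoDom_univ_prod_pair (α := α) hc)
  obtain ⟨T, hT, hTcard⟩ := hS.exists_addRow f hf
  exact (gamma2t_le hT).trans (hScard ▸ hTcard)

theorem gamma2t_rookGraph_fin_le_succ {β : Type*} [Fintype β] [Nontrivial β] {n : ℕ}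
    (hn : 2 ≤ n) : gamma2t (rookGraph (Fin n) β) ≤ gamma2t (rookGraph (Fin (n + 1)) β) := by
  have : Nontrivial (Fin n) := Fin.nontrivial_iff_two_le.2 hn
  obtain ⟨c₀, c₁, hc⟩ := exists_pair_ne β
  by_cases hlarge : 2 * n ≤ gamma2t (rookGraph (Fin (n + 1)) β)
  · calc gamma2t (rookGraph (Fin n) β) ≤ (Set.univ ×ˢ {c₀, c₁}).ncard :=
          gamma2t_le (totalTwoDom_univ_prod_pair hc)
      _ = 2 * n := by rw [ncard_univ_prod_pair hc, Fintype.card_fin]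
      _ ≤ _ := hlarge
  have : Nontrivial (Fin (n + 1)) := Fin.nontrivial_iff_two_le.2 (by omega)
  obtain ⟨S, hS, hScard⟩ :=
    exists_totalTwoDom_ncard_eq_gamma2t (totalTwoDom_univ_prod_pair (α := Fin (n + 1)) hc)
  obtain ⟨ρ, hρ⟩ := exists_row_subsingleton (S := S) (by rw [Fintype.card_fin]; omega)
  obtain ⟨T, hT, hTcard⟩ := hS.exists_deleteRow ρ.succAboveEmb (Fin.range_succAbove ρ) hρ
  exact (gamma2t_le hT).trans (hScard ▸ hTcard)

theorem stmt_5 (n m : ℕ) (hn : 2 ≤ n) (hnm : n ≤ m) :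
    gamma2t (K n □ K m) ≤ gamma2t (K (n + 1) □ K m) ∧
    gamma2t (K (n + 1) □ K m) ≤ gamma2t (K n □ K m) + 2 := by
  have : Nontrivial (Fin n) := Fin.nontrivial_iff_two_le.2 hn
  have : Nontrivial (Fin m) := Fin.nontrivial_iff_two_le.2 (hn.trans hnm)
  exact ⟨gamma2t_rookGraph_fin_le_succ hn,
    gamma2t_rookGraph_le_add_two (Fin.last n).succAboveEmb (Fin.range_succAbove _)⟩
end

section
/- Let n, m ≥ 2 and suppose S is a total 2-dominating set of K_n □ K_m with |S| < 2·min{n,m}. Then for every row v ∈ V(K_n), the set S ∩ ({v} × V(K_m)) is nonempty, and for every column w ∈ V(K_m), the set S ∩ (V(K_n) × {w}) is nonempty. -/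
open SimpleGraph

/-
If a total 2-dominating set `S` of `G □ H` misses the row `{v} × β`, then the two `S`-neighbours
of each `(v, w)` lie in the column `α × {w}`; so every column meets `S` twice and
`|S| ≥ 2 |β|`. Exchanging the factors gives the statement for columns.
-/

theorem Set.mul_card_le_ncard_of_le_ncard_fiber {α β : Type*} [Finite α] [Finite β]
    {S : Set (α × β)} {k : ℕ} (h : ∀ w : β, k ≤ (S ∩ {p | p.2 = w}).ncard) :
    k * Nat.card β ≤ S.ncard := by
  classical
  have := Fintype.ofFinite α
  have := Fintype.ofFinite β
  rw [Nat.card_eq_fintype_card, ← Finset.card_univ, Set.ncard_eq_toFinset_card']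
  refine Finset.mul_card_image_le_card_of_maps_to (f := Prod.snd)
    (fun _ _ => Finset.mem_univ _) k fun w _ => ?_
  convert h w
  rw [Set.ncard_eq_toFinset_card']
  congr 1
  ext p
  simp

namespace TotalTwoDom

variable {α β γ : Type*} {G : SimpleGraph α} {H : SimpleGraph β}

theorem image_iso {G' : SimpleGraph γ} {S : Set α} (hS : TotalTwoDom G S) (e : G ≃g G') :
    TotalTwoDom G' (e '' S) := by
  intro v
  have hnbr : e '' S ∩ {u | G'.Adj v u} = e '' (S ∩ {u | G.Adj (e.symm v) u}) := by
    ext u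
    constructor
    · rintro ⟨⟨x, hx, rfl⟩, hadj⟩
      exact ⟨x, ⟨hx, by simpa using e.symm.map_adj_iff.mpr hadj⟩, rfl⟩
    · rintro ⟨x, ⟨hx, hadj⟩, rfl⟩
      exact ⟨⟨x, hx, rfl⟩, by simpa using e.map_adj_iff.mpr hadj⟩
  rw [hnbr, Set.ncard_image_of_injective _ e.injective]
  exact hS _

theorem two_mul_card_le_ncard_of_row_eq_empty [Finite α] [Finite β] {S : Set (α × β)}
    (hS : TotalTwoDom (G □ H) S) {v : α} (hv : S ∩ {p | p.1 = v} = ∅) :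
    2 * Nat.card β ≤ S.ncard := by
  refine Set.mul_card_le_ncard_of_le_ncard_fiber fun w => (hS (v, w)).trans ?_
  refine Set.ncard_le_ncard ?_ (Set.toFinite _)
  rintro u ⟨huS, hadj⟩
  refine ⟨huS, ?_⟩
  rcases hadj with ⟨-, hw⟩ | ⟨-, hv'⟩
  · exact hw.symm
  · exact absurd ⟨huS, hv'.symm⟩ (Set.eq_empty_iff_forall_notMem.mp hv u)

theorem row_nonempty [Finite α] [Finite β] {S : Set (α × β)} (hS : TotalTwoDom (G □ H) S)
    (hcard : S.ncard < 2 * Nat.card β) (v : α) : (S ∩ {p | p.1 = v}).Nonempty := by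
  rw [Set.nonempty_iff_ne_empty]
  intro hv
  exact (hS.two_mul_card_le_ncard_of_row_eq_empty hv).not_gt hcard

theorem col_nonempty [Finite α] [Finite β] {S : Set (α × β)} (hS : TotalTwoDom (G □ H) S)
    (hcard : S.ncard < 2 * Nat.card α) (w : β) : (S ∩ {p | p.2 = w}).Nonempty := by
  have hswap := hS.image_iso (boxProdComm G H)
  obtain ⟨_, ⟨p, hp, rfl⟩, hw⟩ := hswap.row_nonempty
    (by rwa [Set.ncard_image_of_injective _ (boxProdComm G H).injective]) w
  exact ⟨p, hp, hw⟩

end TotalTwoDom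

theorem stmt_6_general (n m : ℕ)
    (S : Set (Fin n × Fin m)) (hS : TotalTwoDom (K n □ K m) S)
    (hcard : S.ncard < 2 * min n m) :
    (∀ v : Fin n, (S ∩ {p | p.1 = v}).Nonempty) ∧
    (∀ w : Fin m, (S ∩ {p | p.2 = w}).Nonempty) :=
  ⟨hS.row_nonempty (by simp only [Nat.card_eq_fintype_card, Fintype.card_fin]; omega),
    hS.col_nonempty (by simp only [Nat.card_eq_fintype_card, Fintype.card_fin]; omega)⟩

theorem stmt_6 (n m : ℕ) (hn : 2 ≤ n) (hm : 2 ≤ m)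
    (S : Set (Fin n × Fin m)) (hS : TotalTwoDom (K n □ K m) S)
    (hcard : S.ncard < 2 * min n m) :
    (∀ v : Fin n, (S ∩ {p | p.1 = v}).Nonempty) ∧
    (∀ w : Fin m, (S ∩ {p | p.2 = w}).Nonempty) :=
  stmt_6_general n m S hS hcard
end

section
/- γ_{2t}(K_4 □ K_4) = 6. -/
/-!
Every vertex of the rook's graph `K₄ □ K₄` has degree 6. Counting the pairs `(v, s)` with `s ∈ S`
adjacent to `v` in two ways shows that a total 2-dominating set `S` satisfies `16 · 2 ≤ 6 · |S|`,
so `|S| ≥ 6`. The cross formed by the first row and the first column, without their common cell,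
is a total 2-dominating set of size 6.
-/

open SimpleGraph

open Finset

namespace SimpleGraph

variable {α β : Type*}

instance boxProdDecidableRel [DecidableEq α] [DecidableEq β] (G : SimpleGraph α)
    (H : SimpleGraph β) [DecidableRel G.Adj] [DecidableRel H.Adj] : DecidableRel (G □ H).Adj :=
  fun _ _ => decidable_of_iff' _ boxProd_adj

theorem IsRegularOfDegree.boxProd {G : SimpleGraph α} {H : SimpleGraph β} [G.LocallyFinite]
    [H.LocallyFinite] [(G □ H).LocallyFinite] {d e : ℕ}
    (hG : G.IsRegularOfDegree d) (hH : H.IsRegularOfDegree e) :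
    (G □ H).IsRegularOfDegree (d + e) := fun x => by
  rw [degree_boxProd, hG.degree_eq, hH.degree_eq]

end SimpleGraph

section TotalTwoDom

variable {V : Type*} {G : SimpleGraph V}

theorem ncard_coe_inter_adj [DecidableRel G.Adj] (S : Finset V) (v : V) :
    ((S : Set V) ∩ {u | G.Adj v u}).ncard = #(S.filter (G.Adj v)) := by
  rw [← Set.ncard_coe_finset, coe_filter]
  rfl

theorem totalTwoDom_coe_iff [DecidableRel G.Adj] {S : Finset V} :
    TotalTwoDom G S ↔ ∀ v, 2 ≤ #(S.filter (G.Adj v)) := by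
  simp only [TotalTwoDom, ncard_coe_inter_adj]

theorem TotalTwoDom.card_mul_two_le_ncard_mul [Fintype V] [DecidableRel G.Adj] [G.LocallyFinite]
    {d : ℕ} (hG : G.IsRegularOfDegree d) {S : Set V} (hS : TotalTwoDom G S) :
    Fintype.card V * 2 ≤ S.ncard * d := by
  lift S to Finset V using S.toFinite
  rw [Set.ncard_coe_finset]
  refine card_mul_le_card_mul G.Adj (fun v _ => totalTwoDom_coe_iff.1 hS v) fun u _ => ?_
  rw [bipartiteBelow, ← hG.degree_eq u, ← card_neighborFinset_eq_degree]
  exact card_le_card fun w => by simp [G.adj_comm]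

theorem gamma2t_eq_of_isLeast [Fintype V] {k : ℕ}
    (h : IsLeast {m | ∃ S : Set V, TotalTwoDom G S ∧ S.ncard = m} k) : gamma2t G = k :=
  h.csInf_eq

end TotalTwoDom

instance K.decidableRelAdj (n : ℕ) : DecidableRel (K n).Adj :=
  fun a b => inferInstanceAs (Decidable (a ≠ b))

theorem isRegularOfDegree_K (n : ℕ) [(K n).LocallyFinite] :
    (K n).IsRegularOfDegree (n - 1) := fun v => by
  rw [← card_neighborSet_eq_degree, ← Nat.card_eq_fintype_card]
  change Nat.card ((⊤ : SimpleGraph (Fin n)).neighborSet v) = n - 1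
  simp [filter_ne']

def rookCross : Finset (Fin 4 × Fin 4) := {(0, 1), (0, 2), (0, 3), (1, 0), (2, 0), (3, 0)}

theorem totalTwoDom_rookCross : TotalTwoDom (K 4 □ K 4) rookCross := by
  rw [totalTwoDom_coe_iff]
  decide

theorem stmt_10 : gamma2t (K 4 □ K 4) = 6 := by
  refine gamma2t_eq_of_isLeast
    ⟨⟨rookCross, totalTwoDom_rookCross, by rw [Set.ncard_coe_finset]; decide⟩, ?_⟩
  rintro _ ⟨S, hS, rfl⟩
  have := hS.card_mul_two_le_ncard_mul ((isRegularOfDegree_K 4).boxProd (isRegularOfDegree_K 4))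
  simp only [Fintype.card_prod, Fintype.card_fin] at this
  omega
end
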